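/- The minimal ideal of the transition semigroup of a synchronizing automaton consists exactly of the classes of reset input functions, and is a right zero semigroup. -/

import Mathlib

/-- Extended transition function of an automaton: the action of a word on a state. -/
def run {S Alph : Type*} (δ : S → Alph → S) (s : S) (x : List Alph) : S :=
  x.foldl δ s

/-- Single-letter transition of the direct product automaton. -/
def prodStep {S T Alph : Type*} (δ : S → Alph → S) (γ : T → Alph → T) :
    S × T → Alph → S × T :=
  fun p a => (δ p.1 a, γ p.2 a)

/-- An automaton is strongly connected if every state reaches every state. -/
def StronglyConnected {S Alph : Type*} (δ : S → Alph → S) : Prop :=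
  ∀ s t : S, ∃ x : List Alph, run δ s x = t

/-- A word is a reset input function if it sends every state to one fixed state. -/
def IsReset {S Alph : Type*} (δ : S → Alph → S) (x : List Alph) : Prop :=
  ∃ t : S, ∀ s : S, run δ s x = t

/-- A synchronizing automaton has at least one reset input function. -/
def Synchronizing {S Alph : Type*} (δ : S → Alph → S) : Prop :=
  ∃ x : List Alph, IsReset δ x

/-- A permutation automaton: every input word acts bijectively on the states. -/
def PermutationAut {S Alph : Type*} (δ : S → Alph → S) : Prop :=
  ∀ x : List Alph, Function.Bijective (fun s : S => run δ s x)

/-- The range `Im_A(x)` of the input function given by the word `x`. -/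
def Im {S Alph : Type*} (δ : S → Alph → S) (x : List Alph) : Set S :=
  Set.range fun s : S => run δ s x

/-- The rank of a word: cardinality of its range. -/
noncomputable def wordRank {S Alph : Type*} (δ : S → Alph → S) (x : List Alph) : ℕ :=
  (Im δ x).ncard

/-- `[x]_A` lies in the minimal ideal `I(A)` of the transition semigroup:
`x` is a nonempty word of minimal rank among nonempty words. -/
def InMinIdeal {S Alph : Type*} (δ : S → Alph → S) (x : List Alph) : Prop :=
  x ≠ [] ∧ ∀ y : List Alph, y ≠ [] → wordRank δ x ≤ wordRank δ y

/-- `x ≡_A y` : the words `x` and `y` act equally on every state. -/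
def ActEq {S Alph : Type*} (δ : S → Alph → S) (x y : List Alph) : Prop :=
  ∀ s : S, run δ s x = run δ s y

/-- `[e]_A` is an idempotent element of the minimal ideal `I(A)`. -/
def IdemMin {S Alph : Type*} (δ : S → Alph → S) (e : List Alph) : Prop :=
  InMinIdeal δ e ∧ ActEq δ (e ++ e) e

/-- The minimal ideal `I(A)` is right simple: for all `a, b ∈ I(A)` there is
`c ∈ I(A)` with `ac = b`. -/
def RightSimpleMin {S Alph : Type*} (δ : S → Alph → S) : Prop :=
  ∀ a b : List Alph, InMinIdeal δ a → InMinIdeal δ b →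
    ∃ c : List Alph, InMinIdeal δ c ∧ ActEq δ (a ++ c) b

/-- The minimal ideal `I(A)` is a right group: right simple with an idempotent. -/
def RightGroupMin {S Alph : Type*} (δ : S → Alph → S) : Prop :=
  RightSimpleMin δ ∧ ∃ e : List Alph, IdemMin δ e

/-- The ranges of the idempotents of `I(A)` form a partition of the state set. -/
def IdemPartition {S Alph : Type*} (δ : S → Alph → S) : Prop :=
  (∀ s : S, ∃ e : List Alph, IdemMin δ e ∧ s ∈ Im δ e) ∧
  ∀ e f : List Alph, IdemMin δ e → IdemMin δ f →
    Im δ e ∩ Im δ f = ∅ ∨ Im δ e = Im δ f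

/-- A quasi-ideal automaton. -/
def QuasiIdeal {S Alph : Type*} (δ : S → Alph → S) : Prop :=
  StronglyConnected δ ∧ RightGroupMin δ ∧ IdemPartition δ

/-- An automaton congruence: an equivalence relation on states compatible with
the action of every word. -/
def AutCongruence {S Alph : Type*} (δ : S → Alph → S) (r : S → S → Prop) : Prop :=
  Equivalence r ∧ ∀ s t : S, r s t → ∀ z : List Alph, r (run δ s z) (run δ t z)

/-- The congruence `π` : `s π t` iff `sx = tx` for every `[x]_A ∈ I(A)`. -/
def piRel {S Alph : Type*} (δ : S → Alph → S) (s t : S) : Prop :=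
  ∀ x : List Alph, InMinIdeal δ x → run δ s x = run δ t x

/-- The congruence `ρ` : `s ρ t` iff `s, t ∈ Im_A(e)` for some `[e]_A ∈ E(A)`. -/
def rhoRel {S Alph : Type*} (δ : S → Alph → S) (s t : S) : Prop :=
  ∃ e : List Alph, IdemMin δ e ∧ s ∈ Im δ e ∧ t ∈ Im δ e

/-!
A reset word has rank `1`, the least rank any word can have. Prefixing a reset word `w` with a
nonempty word gives a nonempty reset word, so the minimal rank among nonempty words is `1` and
the minimal ideal consists of the reset words. A reset word `y` sends every state to the same
state, so `xy` acts as `y`.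
-/

section

variable {S Alph : Type*} {δ : S → Alph → S}

theorem run_append (s : S) (x y : List Alph) : run δ s (x ++ y) = run δ (run δ s x) y :=
  List.foldl_append

theorem IsReset.actEq_append_left {y : List Alph} (hy : IsReset δ y) (x : List Alph) :
    ActEq δ (x ++ y) y := by
  obtain ⟨t, ht⟩ := hy
  intro s
  rw [run_append, ht, ht]

theorem IsReset.append_left {y : List Alph} (hy : IsReset δ y) (x : List Alph) :
    IsReset δ (x ++ y) := by
  obtain ⟨t, ht⟩ := hy
  exact ⟨t, fun s => by rw [run_append, ht]⟩

theorem isReset_iff_wordRank_eq_one [Nonempty S] {x : List Alph} :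
    IsReset δ x ↔ wordRank δ x = 1 := by
  simp only [wordRank, Im, Set.ncard_eq_one, Set.range_eq_singleton_iff, IsReset]

theorem one_le_wordRank [Finite S] [Nonempty S] (x : List Alph) : 1 ≤ wordRank δ x :=
  (Set.ncard_pos (Set.toFinite _)).2 (Set.range_nonempty _)

theorem inMinIdeal_iff_isReset [Finite S] (hsync : Synchronizing δ) {x : List Alph}
    (hx : x ≠ []) : InMinIdeal δ x ↔ IsReset δ x := by
  obtain ⟨w, hw⟩ := hsync
  have : Nonempty S := ⟨hw.choose⟩
  rw [isReset_iff_wordRank_eq_one]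
  constructor
  · intro hmin
    have hxw : wordRank δ (x ++ w) = 1 := isReset_iff_wordRank_eq_one.1 (hw.append_left x)
    exact le_antisymm (hxw ▸ hmin.2 (x ++ w) (by simp [hx])) (one_le_wordRank x)
  · intro hrank
    exact ⟨hx, fun y _ => hrank ▸ one_le_wordRank y⟩

end

/-- For a synchronizing automaton, the minimal ideal of the transition semigroup
consists exactly of the classes of reset words, and is a right zero semigroup. -/
theorem stmt17 {S Alph : Type*} [Finite S] (δ : S → Alph → S)
    (hsync : Synchronizing δ) :
    (∀ x : List Alph, x ≠ [] → (InMinIdeal δ x ↔ IsReset δ x)) ∧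
    (∀ x y : List Alph, InMinIdeal δ x → InMinIdeal δ y → ActEq δ (x ++ y) y) :=
  ⟨fun _ hx => inMinIdeal_iff_isReset hsync hx,
    fun x _ _ hy => ((inMinIdeal_iff_isReset hsync hy.1).1 hy).actEq_append_left x⟩
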